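/- arXiv:math/0612266 — 8 statements merged into one kernel-verified Lean document; each statement's English description precedes it below -/
import Mathlib

section
/- In the ring of formal power series in two variables x and y over the integers, the rational function (1 - x*y)*(1 - x*y^3) / ((1-x)*(1-y)*(1-x*y^2)*(1-x^2*y^3)) equals 1/((1-x)*(1-x*y^2)) + y/((1-y)*(1-x^2*y^3)). -/
/-- The generating function `b(0)` for Blattner's formula for split `G₂` with all
simple roots noncompact: in `ℤ[[x,y]]`,
`(1-xy)(1-xy³)/((1-x)(1-y)(1-xy²)(1-x²y³)) = 1/((1-x)(1-xy²)) + y/((1-y)(1-x²y³))`.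
The denominators are units (constant term 1), and division is expressed via
`Ring.inverse`. -/
theorem blattner_G2_generating_function :
    let x : MvPowerSeries (Fin 2) ℤ := MvPowerSeries.X 0
    let y : MvPowerSeries (Fin 2) ℤ := MvPowerSeries.X 1
    (1 - x * y) * (1 - x * y ^ 3) *
        Ring.inverse ((1 - x) * (1 - y) * (1 - x * y ^ 2) * (1 - x ^ 2 * y ^ 3))
      = Ring.inverse ((1 - x) * (1 - x * y ^ 2))
        + y * Ring.inverse ((1 - y) * (1 - x ^ 2 * y ^ 3)) := by
  intro x y
  have unit : ∀ f : MvPowerSeries (Fin 2) ℤ, MvPowerSeries.constantCoeff f = 0 →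
      IsUnit (1 - f) := by
    intro f hf
    rw [MvPowerSeries.isUnit_iff_constantCoeff]
    simp [hf]
  have hx : IsUnit (1 - x) := unit _ (by simp [x])
  have hy : IsUnit (1 - y) := unit _ (by simp [y])
  have hc : IsUnit (1 - x * y ^ 2) := unit _ (by simp [x, y])
  have hd : IsUnit (1 - x ^ 2 * y ^ 3) := unit _ (by simp [x, y])
  have hac := hx.mul hc
  have hbd := hy.mul hd
  have habcd : IsUnit ((1 - x) * (1 - y) * (1 - x * y ^ 2) * (1 - x ^ 2 * y ^ 3)) :=
    ((hx.mul hy).mul hc).mul hd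
  apply habcd.mul_left_cancel
  have e1 := Ring.mul_inverse_cancel _ habcd
  have e2 := Ring.mul_inverse_cancel _ hac
  have e3 := Ring.mul_inverse_cancel _ hbd
  calc ((1 - x) * (1 - y) * (1 - x * y ^ 2) * (1 - x ^ 2 * y ^ 3)) *
        ((1 - x * y) * (1 - x * y ^ 3) *
          Ring.inverse ((1 - x) * (1 - y) * (1 - x * y ^ 2) * (1 - x ^ 2 * y ^ 3)))
      = (1 - x * y) * (1 - x * y ^ 3) *
          (((1 - x) * (1 - y) * (1 - x * y ^ 2) * (1 - x ^ 2 * y ^ 3)) *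
            Ring.inverse ((1 - x) * (1 - y) * (1 - x * y ^ 2) * (1 - x ^ 2 * y ^ 3))) := by ring
    _ = (1 - x * y) * (1 - x * y ^ 3) := by rw [e1, mul_one]
    _ = (1 - y) * (1 - x ^ 2 * y ^ 3) * (((1 - x) * (1 - x * y ^ 2)) *
            Ring.inverse ((1 - x) * (1 - x * y ^ 2)))
        + (1 - x) * (1 - x * y ^ 2) * y * (((1 - y) * (1 - x ^ 2 * y ^ 3)) *
            Ring.inverse ((1 - y) * (1 - x ^ 2 * y ^ 3))) := by rw [e2, e3]; ring
    _ = ((1 - x) * (1 - y) * (1 - x * y ^ 2) * (1 - x ^ 2 * y ^ 3)) *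
        (Ring.inverse ((1 - x) * (1 - x * y ^ 2))
          + y * Ring.inverse ((1 - y) * (1 - x ^ 2 * y ^ 3))) := by ring
end

section
/- Every coefficient of the formal power series (1 - x*y)*(1 - x*y^3) / ((1-x)*(1-y)*(1-x*y^2)*(1-x^2*y^3)) in ℤ[[x,y]] is a nonnegative integer. -/
open MvPowerSeries Finsupp

noncomputable section BlattnerG2

open Classical in
/-- The geometric series `∑ₙ (monomial e)ⁿ`. -/
def blattnerGeom (e : Fin 2 →₀ ℕ) : MvPowerSeries (Fin 2) ℤ :=
  fun d => if ∃ n : ℕ, d = n • e then 1 else 0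

open Classical in
lemma blattnerGeom_coeff (e d : Fin 2 →₀ ℕ) :
    MvPowerSeries.coeff d (blattnerGeom e) = if ∃ n : ℕ, d = n • e then 1 else 0 :=
  rfl

lemma blattnerGeom_nonneg (e d : Fin 2 →₀ ℕ) :
    0 ≤ MvPowerSeries.coeff d (blattnerGeom e) := by
  classical
  rw [blattnerGeom_coeff]
  split_ifs <;> norm_num

lemma blattner_one_sub_mul_geom (e : Fin 2 →₀ ℕ) (he : e ≠ 0) :
    (1 - MvPowerSeries.monomial e 1) * blattnerGeom e = 1 := by
  classical
  ext d
  rw [sub_mul, one_mul, map_sub, MvPowerSeries.coeff_monomial_mul,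
    MvPowerSeries.coeff_one, blattnerGeom_coeff]
  by_cases hle : e ≤ d
  · rw [if_pos hle, one_mul, blattnerGeom_coeff]
    have hd0 : d ≠ 0 := by
      intro h
      apply he
      ext i
      have := (Finsupp.le_def.mp hle) i
      simp [h] at this
      simp [this]
    rw [if_neg hd0]
    have hiff : (∃ n : ℕ, d = n • e) ↔ (∃ n : ℕ, d - e = n • e) := by
      constructor
      · rintro ⟨n, rfl⟩
        rcases n with _ | m
        · exfalso
          apply hd0
          simp
        · refine ⟨m, ?_⟩
          ext i
          simp only [Finsupp.tsub_apply, Finsupp.smul_apply, smul_eq_mul]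
          rw [Nat.succ_mul]
          omega
      · rintro ⟨n, hn⟩
        refine ⟨n + 1, ?_⟩
        have : d - e + e = d := tsub_add_cancel_of_le hle
        rw [← this, hn]
        ext i
        simp only [Finsupp.add_apply, Finsupp.smul_apply, smul_eq_mul, Nat.succ_mul]
      
    by_cases h1 : ∃ n : ℕ, d = n • e
    · rw [if_pos h1, if_pos (hiff.mp h1)]; ring
    · rw [if_neg h1, if_neg (fun h2 => h1 (hiff.mpr h2))]; ring
  · rw [if_neg hle, sub_zero]
    by_cases hd0 : d = 0
    · rw [if_pos hd0, if_pos ⟨0, by simp [hd0]⟩]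
    · rw [if_neg hd0, if_neg]
      rintro ⟨n, rfl⟩
      rcases n with _ | m
      · exact hd0 (by simp)
      · apply hle
        rw [Finsupp.le_def]
        intro i
        simp only [Finsupp.smul_apply, smul_eq_mul]
        exact Nat.le_mul_of_pos_left _ (Nat.succ_pos m)

lemma blattner_coeff_mul_nonneg {f g : MvPowerSeries (Fin 2) ℤ}
    (hf : ∀ d, 0 ≤ MvPowerSeries.coeff d f) (hg : ∀ d, 0 ≤ MvPowerSeries.coeff d g)
    (d : Fin 2 →₀ ℕ) : 0 ≤ MvPowerSeries.coeff d (f * g) := by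
  classical
  rw [MvPowerSeries.coeff_mul]
  exact Finset.sum_nonneg fun p _ => mul_nonneg (hf _) (hg _)

lemma blattner_coeff_X_nonneg (s : Fin 2) (d : Fin 2 →₀ ℕ) :
    0 ≤ MvPowerSeries.coeff d (MvPowerSeries.X s : MvPowerSeries (Fin 2) ℤ) := by
  classical
  rw [MvPowerSeries.X_def, MvPowerSeries.coeff_monomial]
  split_ifs <;> norm_num

end BlattnerG2

/-- b-positivity of `G₂` (grading with no compact simple roots): every coefficient of
`(1-xy)(1-xy³)/((1-x)(1-y)(1-xy²)(1-x²y³))` in `ℤ[[x,y]]` is nonnegative. -/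
theorem blattner_G2_b_positive :
    let x : MvPowerSeries (Fin 2) ℤ := MvPowerSeries.X 0
    let y : MvPowerSeries (Fin 2) ℤ := MvPowerSeries.X 1
    ∀ d : Fin 2 →₀ ℕ,
      0 ≤ MvPowerSeries.coeff d
        ((1 - x * y) * (1 - x * y ^ 3) *
          Ring.inverse ((1 - x) * (1 - y) * (1 - x * y ^ 2) * (1 - x ^ 2 * y ^ 3))) := by
  intro x y d
  classical
  set e1 : Fin 2 →₀ ℕ := Finsupp.single 0 1 with he1def
  set e2 : Fin 2 →₀ ℕ := Finsupp.single 1 1 with he2def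
  set e3 : Fin 2 →₀ ℕ := Finsupp.single 0 1 + Finsupp.single 1 2 with he3def
  set e4 : Fin 2 →₀ ℕ := Finsupp.single 0 2 + Finsupp.single 1 3 with he4def
  have he1 : e1 ≠ 0 := by
    rw [he1def]; intro h
    have := DFunLike.congr_fun h (0 : Fin 2); simp [Finsupp.single_apply] at this
  have he2 : e2 ≠ 0 := by
    rw [he2def]; intro h
    have := DFunLike.congr_fun h (1 : Fin 2); simp [Finsupp.single_apply] at this
  have he3 : e3 ≠ 0 := by
    rw [he3def]; intro h
    have := DFunLike.congr_fun h (0 : Fin 2); simp [Finsupp.single_apply] at this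
  have he4 : e4 ≠ 0 := by
    rw [he4def]; intro h
    have := DFunLike.congr_fun h (0 : Fin 2); simp [Finsupp.single_apply] at this
  have hm1 : (MvPowerSeries.monomial e1 1 : MvPowerSeries (Fin 2) ℤ) = x := by
    rw [he1def, ← MvPowerSeries.X_def]
  have hm2 : (MvPowerSeries.monomial e2 1 : MvPowerSeries (Fin 2) ℤ) = y := by
    rw [he2def, ← MvPowerSeries.X_def]
  have hm3 : (MvPowerSeries.monomial e3 1 : MvPowerSeries (Fin 2) ℤ) = x * y ^ 2 := by
    rw [he3def]
    show _ = MvPowerSeries.X 0 * MvPowerSeries.X 1 ^ 2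
    rw [MvPowerSeries.X_def, MvPowerSeries.X_pow_eq, MvPowerSeries.monomial_mul_monomial,
      one_mul]
  have hm4 : (MvPowerSeries.monomial e4 1 : MvPowerSeries (Fin 2) ℤ) = x ^ 2 * y ^ 3 := by
    rw [he4def]
    show _ = MvPowerSeries.X 0 ^ 2 * MvPowerSeries.X 1 ^ 3
    rw [MvPowerSeries.X_pow_eq, MvPowerSeries.X_pow_eq, MvPowerSeries.monomial_mul_monomial,
      one_mul]
  set g1 := blattnerGeom e1
  set g2 := blattnerGeom e2
  set g3 := blattnerGeom e3
  set g4 := blattnerGeom e4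
  have h1 : (1 - x) * g1 = 1 := by rw [← hm1]; exact blattner_one_sub_mul_geom e1 he1
  have h2 : (1 - y) * g2 = 1 := by rw [← hm2]; exact blattner_one_sub_mul_geom e2 he2
  have h3 : (1 - x * y ^ 2) * g3 = 1 := by rw [← hm3]; exact blattner_one_sub_mul_geom e3 he3
  have h4 : (1 - x ^ 2 * y ^ 3) * g4 = 1 := by rw [← hm4]; exact blattner_one_sub_mul_geom e4 he4
  set D : MvPowerSeries (Fin 2) ℤ := (1 - x) * (1 - y) * (1 - x * y ^ 2) * (1 - x ^ 2 * y ^ 3)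
    with hDdef
  set G : MvPowerSeries (Fin 2) ℤ := g1 * g2 * g3 * g4 with hGdef
  have hDG : D * G = 1 := by
    have : D * G = ((1 - x) * g1) * (((1 - y) * g2) *
        (((1 - x * y ^ 2) * g3) * ((1 - x ^ 2 * y ^ 3) * g4))) := by
      rw [hDdef, hGdef]; ring
    rw [this, h1, h2, h3, h4]; ring
  have hinv : Ring.inverse D = G := by
    have := Ring.inverse_unit (Units.mkOfMulEqOne D G hDG)
    exact this
  rw [hinv]
  set RHS : MvPowerSeries (Fin 2) ℤ :=
    g1 + y * g2 + x * y ^ 2 * (g1 * g3) + x ^ 2 * y ^ 4 * (g2 * g4) with hRdef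
  have key : (1 - x * y) * (1 - x * y ^ 3) * G = RHS := by
    have hRD : RHS * D = (1 - x * y) * (1 - x * y ^ 3) := by
      calc RHS * D
          = ((1 - x) * g1) * ((1 - y) * (1 - x * y ^ 2) * (1 - x ^ 2 * y ^ 3))
            + y * (((1 - y) * g2) * ((1 - x) * (1 - x * y ^ 2) * (1 - x ^ 2 * y ^ 3)))
            + x * y ^ 2 * ((((1 - x) * g1) * ((1 - x * y ^ 2) * g3)) *
                ((1 - y) * (1 - x ^ 2 * y ^ 3)))
            + x ^ 2 * y ^ 4 * ((((1 - y) * g2) * ((1 - x ^ 2 * y ^ 3) * g4)) *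
                ((1 - x) * (1 - x * y ^ 2))) := by
            rw [hRdef, hDdef]; ring
        _ = (1 - x * y) * (1 - x * y ^ 3) := by rw [h1, h2, h3, h4]; ring
    calc (1 - x * y) * (1 - x * y ^ 3) * G = (RHS * D) * G := by rw [hRD]
      _ = RHS * (D * G) := by ring
      _ = RHS := by rw [hDG, mul_one]
  rw [key, hRdef]
  have hx : ∀ d, 0 ≤ MvPowerSeries.coeff d x := blattner_coeff_X_nonneg 0
  have hy : ∀ d, 0 ≤ MvPowerSeries.coeff d y := blattner_coeff_X_nonneg 1
  have hg1 := blattnerGeom_nonneg e1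
  have hg2 := blattnerGeom_nonneg e2
  have hg3 := blattnerGeom_nonneg e3
  have hg4 := blattnerGeom_nonneg e4
  have pow2 : ∀ (f : MvPowerSeries (Fin 2) ℤ), (∀ d, 0 ≤ MvPowerSeries.coeff d f) →
      ∀ d, 0 ≤ MvPowerSeries.coeff d (f ^ 2) := by
    intro f hf d
    rw [sq]; exact blattner_coeff_mul_nonneg hf hf d
  have pow3 : ∀ (f : MvPowerSeries (Fin 2) ℤ), (∀ d, 0 ≤ MvPowerSeries.coeff d f) →
      ∀ d, 0 ≤ MvPowerSeries.coeff d (f ^ 3) := by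
    intro f hf d
    rw [pow_succ]
    exact blattner_coeff_mul_nonneg (pow2 f hf) hf d
  have pow4 : ∀ (f : MvPowerSeries (Fin 2) ℤ), (∀ d, 0 ≤ MvPowerSeries.coeff d f) →
      ∀ d, 0 ≤ MvPowerSeries.coeff d (f ^ 4) := by
    intro f hf d
    rw [pow_succ]
    exact blattner_coeff_mul_nonneg (pow3 f hf) hf d
  rw [map_add, map_add, map_add]
  have t1 := hg1 d
  refine add_nonneg (add_nonneg (add_nonneg (hg1 d) ?_) ?_) ?_
  · exact blattner_coeff_mul_nonneg hy hg2 d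
  · exact blattner_coeff_mul_nonneg
      (blattner_coeff_mul_nonneg hx (pow2 y hy)) (blattner_coeff_mul_nonneg hg1 hg3) d
  · exact blattner_coeff_mul_nonneg
      (blattner_coeff_mul_nonneg (pow2 x hx) (pow4 y hy))
      (blattner_coeff_mul_nonneg hg2 hg4) d
end

section
/- In ℤ[[x₁,x₂,x₃]], the series (1 - x₁*x₂)*(1 - x₂*x₃) / ((1-x₁)*(1-x₂)*(1-x₃)*(1-x₁*x₂*x₃)) equals 1/((1-x₃)*(1-x₁)) + x₂/((1-x₂)*(1-x₁*x₂*x₃)), and hence all of its coefficients are nonnegative. -/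
open MvPowerSeries Finsupp

noncomputable def Hs : MvPowerSeries (Fin 3) ℤ := fun d => if d 1 = 0 then 1 else 0
noncomputable def Ks : MvPowerSeries (Fin 3) ℤ :=
  fun d => if d 0 = d 2 ∧ d 0 ≤ d 1 then 1 else 0

lemma coeff_Hs (d : Fin 3 →₀ ℕ) :
    MvPowerSeries.coeff d Hs = if d 1 = 0 then 1 else 0 := rfl

lemma coeff_Ks (d : Fin 3 →₀ ℕ) :
    MvPowerSeries.coeff d Ks = if d 0 = d 2 ∧ d 0 ≤ d 1 then 1 else 0 := rfl

lemma eqz (d : Fin 3 →₀ ℕ) : d = 0 ↔ d 0 = 0 ∧ d 1 = 0 ∧ d 2 = 0 := by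
  constructor
  · rintro rfl; simp
  · rintro ⟨h0, h1, h2⟩
    ext i; fin_cases i <;> simpa

lemma le3 (n m : Fin 3 →₀ ℕ) : n ≤ m ↔ n 0 ≤ m 0 ∧ n 1 ≤ m 1 ∧ n 2 ≤ m 2 := by
  rw [Finsupp.le_def]
  constructor
  · intro h; exact ⟨h 0, h 1, h 2⟩
  · rintro ⟨a, b, c⟩ i; fin_cases i <;> assumption


lemma sap (i j : Fin 3) (n : ℕ) : (single i n) j = if i = j then n else 0 :=
  Finsupp.single_apply

lemma h1 : (1 - MvPowerSeries.X 2) * (1 - MvPowerSeries.X (0:Fin 3)) * Hs = 1 := by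
  ext d
  have expand : (1 - MvPowerSeries.X 2) * (1 - MvPowerSeries.X (0:Fin 3)) * Hs
      = Hs - monomial (single 2 1) 1 * Hs - monomial (single 0 1) 1 * Hs
        + monomial (single 0 1 + single 2 1) (1*1) * Hs := by
    rw [← monomial_mul_monomial, ← X_def, ← X_def]; ring
  rw [expand]
  simp only [map_sub, map_add, coeff_monomial_mul, coeff_Hs, one_mul,
    MvPowerSeries.coeff_one, eqz, le3, Finsupp.sub_apply, Finsupp.add_apply, sap]
  norm_num [Fin.ext_iff]
  split_ifs <;> omega

lemma h2 : (1 - MvPowerSeries.X 1) *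
    (1 - MvPowerSeries.X 0 * MvPowerSeries.X 1 * MvPowerSeries.X (2:Fin 3)) * Ks = 1 := by
  ext d
  have hE : (MvPowerSeries.X 0 * MvPowerSeries.X 1 * MvPowerSeries.X (2:Fin 3)
      : MvPowerSeries (Fin 3) ℤ)
      = monomial (single 0 1 + single 1 1 + single 2 1) 1 := by
    rw [X_def, X_def, X_def, monomial_mul_monomial, monomial_mul_monomial]
    norm_num
  have hsplit : monomial (single (1:Fin 3) 1 + (single 0 1 + single 1 1 + single 2 1)) (1:ℤ)
      = monomial (single 1 1) 1 * monomial (single 0 1 + single 1 1 + single 2 1) 1 := by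
    rw [monomial_mul_monomial, one_mul]
  have expand : (1 - MvPowerSeries.X 1) *
      (1 - MvPowerSeries.X 0 * MvPowerSeries.X 1 * MvPowerSeries.X (2:Fin 3)) * Ks
      = Ks - monomial (single 1 1) 1 * Ks
        - monomial (single 0 1 + single 1 1 + single 2 1) 1 * Ks
        + monomial (single 1 1 + (single 0 1 + single 1 1 + single 2 1)) 1 * Ks := by
    rw [hE, X_def]; linear_combination (-Ks) * hsplit
  rw [expand]
  simp only [map_sub, map_add, coeff_monomial_mul, coeff_Ks, one_mul,
    MvPowerSeries.coeff_one, eqz, le3, Finsupp.sub_apply, Finsupp.add_apply, sap]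
  norm_num [Fin.ext_iff]
  split_ifs <;> omega

lemma ringinv_eq {R : Type*} [CommRing R] {a b : R} (h : a * b = 1) : Ring.inverse a = b := by
  have ha : IsUnit a := ⟨⟨a, b, h, by rw [mul_comm]; exact h⟩, rfl⟩
  calc Ring.inverse a = Ring.inverse a * (a * b) := by rw [h, mul_one]
    _ = (Ring.inverse a * a) * b := by ring
    _ = b := by rw [Ring.inverse_mul_cancel a ha, one_mul]

/-- `b(0)` for `sl₄` with all simple roots noncompact: in `ℤ[[x₁,x₂,x₃]]`,
`(1-x₁x₂)(1-x₂x₃)/((1-x₁)(1-x₂)(1-x₃)(1-x₁x₂x₃))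
  = 1/((1-x₃)(1-x₁)) + x₂/((1-x₂)(1-x₁x₂x₃))`,
and hence all coefficients are nonnegative. -/
theorem blattner_sl4 :
    let x₁ : MvPowerSeries (Fin 3) ℤ := MvPowerSeries.X 0
    let x₂ : MvPowerSeries (Fin 3) ℤ := MvPowerSeries.X 1
    let x₃ : MvPowerSeries (Fin 3) ℤ := MvPowerSeries.X 2
    (1 - x₁ * x₂) * (1 - x₂ * x₃) *
        Ring.inverse ((1 - x₁) * (1 - x₂) * (1 - x₃) * (1 - x₁ * x₂ * x₃))
        = Ring.inverse ((1 - x₃) * (1 - x₁))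
          + x₂ * Ring.inverse ((1 - x₂) * (1 - x₁ * x₂ * x₃))
      ∧ ∀ d : Fin 3 →₀ ℕ,
          0 ≤ MvPowerSeries.coeff d
            ((1 - x₁ * x₂) * (1 - x₂ * x₃) *
              Ring.inverse ((1 - x₁) * (1 - x₂) * (1 - x₃) * (1 - x₁ * x₂ * x₃))) := by
  intro x₁ x₂ x₃
  have hD : ((1 - x₁) * (1 - x₂) * (1 - x₃) * (1 - x₁ * x₂ * x₃)) * (Hs * Ks) = 1 := by
    calc ((1 - x₁) * (1 - x₂) * (1 - x₃) * (1 - x₁ * x₂ * x₃)) * (Hs * Ks)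
        = ((1 - x₃) * (1 - x₁) * Hs) * ((1 - x₂) * (1 - x₁ * x₂ * x₃) * Ks) := by ring
      _ = 1 := by rw [h1, h2, one_mul]
  have hinvD := ringinv_eq hD
  have hinv1 := ringinv_eq h1
  have hinv2 := ringinv_eq h2
  have key : (1 - x₁ * x₂) * (1 - x₂ * x₃) *
      Ring.inverse ((1 - x₁) * (1 - x₂) * (1 - x₃) * (1 - x₁ * x₂ * x₃)) = Hs + x₂ * Ks := by
    rw [hinvD]
    have hA : (1 - x₁ * x₂) * (1 - x₂ * x₃)
        = (1 - x₂) * (1 - x₁ * x₂ * x₃) + x₂ * ((1 - x₃) * (1 - x₁)) := by ring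
    calc (1 - x₁ * x₂) * (1 - x₂ * x₃) * (Hs * Ks)
        = ((1 - x₂) * (1 - x₁ * x₂ * x₃) * Ks) * Hs
          + x₂ * (((1 - x₃) * (1 - x₁)) * Hs) * Ks := by rw [hA]; ring
      _ = Hs + x₂ * Ks := by rw [h1, h2]; ring
  refine ⟨by rw [key, hinv1, hinv2], ?_⟩
  intro d
  rw [key]
  have hx2 : x₂ * Ks = monomial (single 1 1) 1 * Ks := by rw [← X_def]
  rw [map_add, coeff_Hs, hx2, coeff_monomial_mul, coeff_Ks]
  split_ifs <;> simp
end

section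
/- In ℤ[[x₁,x₂]], the series (1 - x₁*x₂) / ((1-x₁)*(1-x₂)*(1-x₁*x₂²)) equals 1/((1-x₂²)*(1-x₁)) + x₂/((1-x₂²)*(1-x₁*x₂²)), and hence all of its coefficients are nonnegative. -/
open MvPowerSeries Finsupp

private noncomputable def G₁ : MvPowerSeries (Fin 2) ℤ :=
  fun d => if d 1 % 2 = 0 then 1 else 0

private noncomputable def G₂ : MvPowerSeries (Fin 2) ℤ :=
  fun d => if d 1 % 2 = 0 ∧ 2 * d 0 ≤ d 1 then 1 else 0

private lemma coeff_G₁ (d : Fin 2 →₀ ℕ) :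
    MvPowerSeries.coeff d G₁ = if d 1 % 2 = 0 then 1 else 0 := rfl

private lemma coeff_G₂ (d : Fin 2 →₀ ℕ) :
    MvPowerSeries.coeff d G₂ = if d 1 % 2 = 0 ∧ 2 * d 0 ≤ d 1 then 1 else 0 := rfl

private lemma le_d (m n : ℕ) (d : Fin 2 →₀ ℕ) :
    Finsupp.single (0 : Fin 2) m + Finsupp.single 1 n ≤ d ↔ m ≤ d 0 ∧ n ≤ d 1 := by
  rw [Finsupp.le_def]
  constructor
  · intro h
    have h0 := h 0; have h1 := h 1
    simp [Finsupp.single_apply] at h0 h1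
    exact ⟨h0, h1⟩
  · rintro ⟨h0, h1⟩ i
    fin_cases i <;> simp [Finsupp.single_apply, h0, h1]

private lemma eq0_d (d : Fin 2 →₀ ℕ) : d = 0 ↔ d 0 = 0 ∧ d 1 = 0 := by
  rw [Finsupp.ext_iff, Fin.forall_fin_two]; rfl


private lemma inv_eq {a b : MvPowerSeries (Fin 2) ℤ} (h : a * b = 1) :
    Ring.inverse a = b :=
  Ring.inverse_unit (Units.mkOfMulEqOne a b h)

private lemma hG₁ :
    ((1 - (MvPowerSeries.X 1 : MvPowerSeries (Fin 2) ℤ) ^ 2) * (1 - MvPowerSeries.X 0)) * G₁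
      = 1 := by
  have expand : ((1 - (MvPowerSeries.X 1 : MvPowerSeries (Fin 2) ℤ) ^ 2) *
      (1 - MvPowerSeries.X 0)) * G₁
      = G₁ - (MvPowerSeries.X 0 : MvPowerSeries (Fin 2) ℤ) * G₁
        - (MvPowerSeries.X 1 : MvPowerSeries (Fin 2) ℤ) ^ 2 * G₁
        + ((MvPowerSeries.X 0 : MvPowerSeries (Fin 2) ℤ) * MvPowerSeries.X 1 ^ 2) * G₁ := by
    ring
  apply MvPowerSeries.ext; intro d
  rw [expand]
  simp only [X_pow_eq]
  simp only [map_add, map_sub, X_def, monomial_mul_monomial, one_mul,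
    coeff_monomial_mul, MvPowerSeries.coeff_one, coeff_G₁, eq0_d,
    Finsupp.single_le_iff, le_d]
  simp only [Finsupp.tsub_apply, Finsupp.add_apply, Finsupp.single_apply, one_mul]
  norm_num
  split_ifs <;> omega

private lemma hG₂ :
    ((1 - (MvPowerSeries.X 1 : MvPowerSeries (Fin 2) ℤ) ^ 2) *
        (1 - MvPowerSeries.X 0 * MvPowerSeries.X 1 ^ 2)) * G₂ = 1 := by
  have expand : ((1 - (MvPowerSeries.X 1 : MvPowerSeries (Fin 2) ℤ) ^ 2) *
      (1 - MvPowerSeries.X 0 * MvPowerSeries.X 1 ^ 2)) * G₂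
      = G₂ - (MvPowerSeries.X 1 : MvPowerSeries (Fin 2) ℤ) ^ 2 * G₂
        - ((MvPowerSeries.X 0 : MvPowerSeries (Fin 2) ℤ) * MvPowerSeries.X 1 ^ 2) * G₂
        + ((MvPowerSeries.X 0 : MvPowerSeries (Fin 2) ℤ) * MvPowerSeries.X 1 ^ 4) * G₂ := by
    ring
  apply MvPowerSeries.ext; intro d
  rw [expand]
  simp only [X_pow_eq]
  simp only [map_add, map_sub, X_def, monomial_mul_monomial, one_mul,
    coeff_monomial_mul, MvPowerSeries.coeff_one, coeff_G₂, eq0_d,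
    Finsupp.single_le_iff, le_d]
  simp only [Finsupp.tsub_apply, Finsupp.add_apply, Finsupp.single_apply, one_mul]
  norm_num
  split_ifs <;> omega

/-- `b(0)` for `so₅` (type `B₂`) with all simple roots noncompact: in `ℤ[[x₁,x₂]]`,
`(1-x₁x₂)/((1-x₁)(1-x₂)(1-x₁x₂²)) = 1/((1-x₂²)(1-x₁)) + x₂/((1-x₂²)(1-x₁x₂²))`,
and hence all coefficients are nonnegative. -/
theorem blattner_so5 :
    let x₁ : MvPowerSeries (Fin 2) ℤ := MvPowerSeries.X 0
    let x₂ : MvPowerSeries (Fin 2) ℤ := MvPowerSeries.X 1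
    (1 - x₁ * x₂) * Ring.inverse ((1 - x₁) * (1 - x₂) * (1 - x₁ * x₂ ^ 2))
        = Ring.inverse ((1 - x₂ ^ 2) * (1 - x₁))
          + x₂ * Ring.inverse ((1 - x₂ ^ 2) * (1 - x₁ * x₂ ^ 2))
      ∧ ∀ d : Fin 2 →₀ ℕ,
          0 ≤ MvPowerSeries.coeff d
            ((1 - x₁ * x₂) *
              Ring.inverse ((1 - x₁) * (1 - x₂) * (1 - x₁ * x₂ ^ 2))) := by
  intro x₁ x₂
  set P : MvPowerSeries (Fin 2) ℤ := (1 - x₁) * (1 - x₂) * (1 - x₁ * x₂ ^ 2) with hPdef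
  have hx₁ : x₁ = MvPowerSeries.X 0 := rfl
  have hx₂ : x₂ = MvPowerSeries.X 1 := rfl
  have hP : IsUnit P := by
    rw [MvPowerSeries.isUnit_iff_constantCoeff, hPdef, hx₁, hx₂]
    simp
  have hD : IsUnit ((1 - x₂ ^ 2) * P) := by
    refine IsUnit.mul ?_ hP
    rw [MvPowerSeries.isUnit_iff_constantCoeff, hx₂]
    simp
  have h1 : P * Ring.inverse P = 1 := Ring.mul_inverse_cancel P hP
  have h2 : ((1 - x₂ ^ 2) * (1 - x₁)) * G₁ = 1 := by rw [hx₁, hx₂]; exact hG₁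
  have h3 : ((1 - x₂ ^ 2) * (1 - x₁ * x₂ ^ 2)) * G₂ = 1 := by rw [hx₁, hx₂]; exact hG₂
  have hQ₁ : Ring.inverse ((1 - x₂ ^ 2) * (1 - x₁)) = G₁ := inv_eq h2
  have hQ₂ : Ring.inverse ((1 - x₂ ^ 2) * (1 - x₁ * x₂ ^ 2)) = G₂ := inv_eq h3
  have key : ((1 - x₂ ^ 2) * P) * ((1 - x₁ * x₂) * Ring.inverse P)
      = ((1 - x₂ ^ 2) * P) * (G₁ + x₂ * G₂) := by
    rw [hPdef]
    linear_combination (1 - x₂ ^ 2) * (1 - x₁ * x₂) * h1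
      - (1 - x₂) * (1 - x₁ * x₂ ^ 2) * h2 - x₂ * (1 - x₁) * (1 - x₂) * h3
  have main : (1 - x₁ * x₂) * Ring.inverse P
      = Ring.inverse ((1 - x₂ ^ 2) * (1 - x₁))
        + x₂ * Ring.inverse ((1 - x₂ ^ 2) * (1 - x₁ * x₂ ^ 2)) := by
    rw [hQ₁, hQ₂]
    exact hD.mul_left_cancel key
  refine ⟨main, fun d => ?_⟩
  rw [main, hQ₁, hQ₂, map_add, coeff_G₁, hx₂, X_def, coeff_monomial_mul]
  simp only [one_mul, coeff_G₂]
  split_ifs <;> omega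
end

section
/- In ℤ[[x₁,x₂,x₃]], the series (1-x₁x₂)(1-x₂x₃)(1-x₁x₂²x₃) / ((1-x₁)(1-x₂)(1-x₃)(1-x₁x₂x₃)(1-x₂²x₃)(1-x₁²x₂²x₃)) equals 1/((1-x₁)(1-x₂²x₃)) + x₁x₃/((1-x₁)(1-x₃)(1-x₁²x₂²x₃)) + x₁²x₂³x₃²/((1-x₂²x₃)(1-x₁²x₂²x₃)(1-x₁x₂x₃)) + x₃/((1-x₂²x₃)(1-x₁²x₂²x₃)(1-x₃)) + x₂/((1-x₂²x₃)(1-x₁²x₂²x₃)(1-x₂)), and hence all of its coefficients are nonnegative. -/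
open MvPowerSeries Finsupp
open scoped Classical

/-- Geometric series associated to a monomial exponent `d`. -/
noncomputable def geomSeries (d : Fin 3 →₀ ℕ) : MvPowerSeries (Fin 3) ℤ :=
  fun e => if ∃ n : ℕ, e = n • d then 1 else 0

lemma coeff_geomSeries (d e : Fin 3 →₀ ℕ) :
    MvPowerSeries.coeff e (geomSeries d) = if ∃ n : ℕ, e = n • d then 1 else 0 := rfl

lemma geomSeries_nonneg (d e : Fin 3 →₀ ℕ) :
    0 ≤ MvPowerSeries.coeff e (geomSeries d) := by
  rw [coeff_geomSeries]
  split <;> norm_num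

lemma geom_mul (d : Fin 3 →₀ ℕ) (hd : d ≠ 0) :
    (1 - MvPowerSeries.monomial d 1) * geomSeries d = 1 := by
  ext e
  rw [sub_mul, one_mul, map_sub, coeff_monomial_mul, coeff_geomSeries]
  by_cases he : e = 0
  · subst he
    have hle : ¬ d ≤ (0 : Fin 3 →₀ ℕ) := by
      intro h; exact hd (le_antisymm h zero_le)
    rw [if_neg hle, if_pos ⟨0, by simp⟩]
    simp
  · rw [MvPowerSeries.coeff_one, if_neg he]
    by_cases hx : ∃ n : ℕ, e = n • d
    · obtain ⟨n, rfl⟩ := hx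
      have hn : n ≠ 0 := by rintro rfl; simp at he
      obtain ⟨m, rfl⟩ := Nat.exists_eq_succ_of_ne_zero hn
      have hdle : d ≤ (m + 1) • d := by
        rw [succ_nsmul]; exact le_add_self
      rw [if_pos ⟨m + 1, rfl⟩, if_pos hdle, coeff_geomSeries]
      have hsub : (m + 1) • d - d = m • d := by
        rw [succ_nsmul]; exact add_tsub_cancel_right _ _
      rw [hsub, if_pos ⟨m, rfl⟩]
      ring
    · rw [if_neg hx]
      by_cases hdle : d ≤ e
      · rw [if_pos hdle, coeff_geomSeries]
        have : ¬ ∃ n : ℕ, e - d = n • d := by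
          rintro ⟨n, hn⟩
          exact hx ⟨n + 1, by rw [succ_nsmul, ← hn, tsub_add_cancel_of_le hdle]⟩
        rw [if_neg this]; ring
      · rw [if_neg hdle]; ring

lemma ring_inverse_eq {R : Type*} [CommRing R] (a b : R) (h : a * b = 1) :
    Ring.inverse a = b := by
  have hu : IsUnit a := IsUnit.of_mul_eq_one b h
  calc Ring.inverse a = Ring.inverse a * (a * b) := by rw [h, mul_one]
    _ = (Ring.inverse a * a) * b := by rw [mul_assoc]
    _ = b := by rw [Ring.inverse_mul_cancel a hu, one_mul]

lemma coeff_mul_nonneg (f g : MvPowerSeries (Fin 3) ℤ)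
    (hf : ∀ e, 0 ≤ MvPowerSeries.coeff e f) (hg : ∀ e, 0 ≤ MvPowerSeries.coeff e g) :
    ∀ e, 0 ≤ MvPowerSeries.coeff e (f * g) := by
  intro e
  classical
  rw [MvPowerSeries.coeff_mul]
  exact Finset.sum_nonneg fun p _ => mul_nonneg (hf _) (hg _)

/-- `b(0)` for `sp₆` (type `C₃`) with all simple roots noncompact: partial fraction
decomposition in `ℤ[[x₁,x₂,x₃]]`, and hence all coefficients are nonnegative. -/
theorem blattner_sp6 :
    let x₁ : MvPowerSeries (Fin 3) ℤ := MvPowerSeries.X 0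
    let x₂ : MvPowerSeries (Fin 3) ℤ := MvPowerSeries.X 1
    let x₃ : MvPowerSeries (Fin 3) ℤ := MvPowerSeries.X 2
    (1 - x₁ * x₂) * (1 - x₂ * x₃) * (1 - x₁ * x₂ ^ 2 * x₃) *
        Ring.inverse ((1 - x₁) * (1 - x₂) * (1 - x₃) * (1 - x₁ * x₂ * x₃) *
          (1 - x₂ ^ 2 * x₃) * (1 - x₁ ^ 2 * x₂ ^ 2 * x₃))
        = Ring.inverse ((1 - x₁) * (1 - x₂ ^ 2 * x₃))
          + x₁ * x₃ *
            Ring.inverse ((1 - x₁) * (1 - x₃) * (1 - x₁ ^ 2 * x₂ ^ 2 * x₃))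
          + x₁ ^ 2 * x₂ ^ 3 * x₃ ^ 2 *
            Ring.inverse ((1 - x₂ ^ 2 * x₃) * (1 - x₁ ^ 2 * x₂ ^ 2 * x₃) *
              (1 - x₁ * x₂ * x₃))
          + x₃ *
            Ring.inverse ((1 - x₂ ^ 2 * x₃) * (1 - x₁ ^ 2 * x₂ ^ 2 * x₃) * (1 - x₃))
          + x₂ *
            Ring.inverse ((1 - x₂ ^ 2 * x₃) * (1 - x₁ ^ 2 * x₂ ^ 2 * x₃) * (1 - x₂))
      ∧ ∀ d : Fin 3 →₀ ℕ,
          0 ≤ MvPowerSeries.coeff d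
            ((1 - x₁ * x₂) * (1 - x₂ * x₃) * (1 - x₁ * x₂ ^ 2 * x₃) *
              Ring.inverse ((1 - x₁) * (1 - x₂) * (1 - x₃) * (1 - x₁ * x₂ * x₃) *
                (1 - x₂ ^ 2 * x₃) * (1 - x₁ ^ 2 * x₂ ^ 2 * x₃))) := by
  intro x₁ x₂ x₃
  -- exponent vectors
  set D1 : Fin 3 →₀ ℕ := Finsupp.single 0 1 with hD1
  set D2 : Fin 3 →₀ ℕ := Finsupp.single 1 1 with hD2
  set D3 : Fin 3 →₀ ℕ := Finsupp.single 2 1 with hD3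
  set D4 : Fin 3 →₀ ℕ := Finsupp.single 0 1 + Finsupp.single 1 1 + Finsupp.single 2 1 with hD4
  set D5 : Fin 3 →₀ ℕ := Finsupp.single 1 2 + Finsupp.single 2 1 with hD5
  set D6 : Fin 3 →₀ ℕ := Finsupp.single 0 2 + Finsupp.single 1 2 + Finsupp.single 2 1 with hD6
  -- the monomials as `monomial`
  have hm1 : x₁ = MvPowerSeries.monomial D1 1 := MvPowerSeries.X_def 0
  have hm2 : x₂ = MvPowerSeries.monomial D2 1 := MvPowerSeries.X_def 1
  have hm3 : x₃ = MvPowerSeries.monomial D3 1 := MvPowerSeries.X_def 2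
  have hm4 : x₁ * x₂ * x₃ = MvPowerSeries.monomial D4 1 := by
    rw [hm1, hm2, hm3, MvPowerSeries.monomial_mul_monomial, MvPowerSeries.monomial_mul_monomial]
    norm_num
    rfl
  have hm5 : x₂ ^ 2 * x₃ = MvPowerSeries.monomial D5 1 := by
    rw [MvPowerSeries.X_pow_eq, hm3, MvPowerSeries.monomial_mul_monomial]
    norm_num
    rfl
  have hm6 : x₁ ^ 2 * x₂ ^ 2 * x₃ = MvPowerSeries.monomial D6 1 := by
    rw [MvPowerSeries.X_pow_eq, MvPowerSeries.X_pow_eq, hm3,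
      MvPowerSeries.monomial_mul_monomial, MvPowerSeries.monomial_mul_monomial]
    norm_num
    rfl
  have hDne : ∀ (i : Fin 3) (n : ℕ), n ≠ 0 → ∀ D : Fin 3 →₀ ℕ, D i = n → D ≠ 0 := by
    intro i n hn D hDi h0
    rw [h0] at hDi; simp at hDi; exact hn hDi.symm
  have hd1 : D1 ≠ 0 := hDne 0 1 one_ne_zero D1 (by simp [hD1])
  have hd2 : D2 ≠ 0 := hDne 1 1 one_ne_zero D2 (by simp [hD2])
  have hd3 : D3 ≠ 0 := hDne 2 1 one_ne_zero D3 (by simp [hD3])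
  have hd4 : D4 ≠ 0 := hDne 2 1 one_ne_zero D4 (by simp [hD4])
  have hd5 : D5 ≠ 0 := hDne 2 1 one_ne_zero D5 (by simp [hD5])
  have hd6 : D6 ≠ 0 := hDne 2 1 one_ne_zero D6 (by simp [hD6])
  set g1 := geomSeries D1
  set g2 := geomSeries D2
  set g3 := geomSeries D3
  set g4 := geomSeries D4
  set g5 := geomSeries D5
  set g6 := geomSeries D6
  have h1 : (1 - x₁) * g1 = 1 := by rw [hm1]; exact geom_mul D1 hd1
  have h2 : (1 - x₂) * g2 = 1 := by rw [hm2]; exact geom_mul D2 hd2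
  have h3 : (1 - x₃) * g3 = 1 := by rw [hm3]; exact geom_mul D3 hd3
  have h4 : (1 - x₁ * x₂ * x₃) * g4 = 1 := by rw [hm4]; exact geom_mul D4 hd4
  have h5 : (1 - x₂ ^ 2 * x₃) * g5 = 1 := by rw [hm5]; exact geom_mul D5 hd5
  have h6 : (1 - x₁ ^ 2 * x₂ ^ 2 * x₃) * g6 = 1 := by rw [hm6]; exact geom_mul D6 hd6
  -- rewrite the inverses
  have hinvP : Ring.inverse ((1 - x₁) * (1 - x₂) * (1 - x₃) * (1 - x₁ * x₂ * x₃) *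
      (1 - x₂ ^ 2 * x₃) * (1 - x₁ ^ 2 * x₂ ^ 2 * x₃)) = g1 * g2 * g3 * g4 * g5 * g6 := by
    apply ring_inverse_eq
    calc (1 - x₁) * (1 - x₂) * (1 - x₃) * (1 - x₁ * x₂ * x₃) * (1 - x₂ ^ 2 * x₃) *
          (1 - x₁ ^ 2 * x₂ ^ 2 * x₃) * (g1 * g2 * g3 * g4 * g5 * g6)
        = ((1 - x₁) * g1) * ((1 - x₂) * g2) * ((1 - x₃) * g3) * ((1 - x₁ * x₂ * x₃) * g4) *
          ((1 - x₂ ^ 2 * x₃) * g5) * ((1 - x₁ ^ 2 * x₂ ^ 2 * x₃) * g6) := by ring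
      _ = 1 := by rw [h1, h2, h3, h4, h5, h6]; ring
  have hinvA : Ring.inverse ((1 - x₁) * (1 - x₂ ^ 2 * x₃)) = g1 * g5 := by
    apply ring_inverse_eq
    calc (1 - x₁) * (1 - x₂ ^ 2 * x₃) * (g1 * g5)
        = ((1 - x₁) * g1) * ((1 - x₂ ^ 2 * x₃) * g5) := by ring
      _ = 1 := by rw [h1, h5]; ring
  have hinvB : Ring.inverse ((1 - x₁) * (1 - x₃) * (1 - x₁ ^ 2 * x₂ ^ 2 * x₃))
      = g1 * g3 * g6 := by
    apply ring_inverse_eq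
    calc (1 - x₁) * (1 - x₃) * (1 - x₁ ^ 2 * x₂ ^ 2 * x₃) * (g1 * g3 * g6)
        = ((1 - x₁) * g1) * ((1 - x₃) * g3) * ((1 - x₁ ^ 2 * x₂ ^ 2 * x₃) * g6) := by ring
      _ = 1 := by rw [h1, h3, h6]; ring
  have hinvC : Ring.inverse ((1 - x₂ ^ 2 * x₃) * (1 - x₁ ^ 2 * x₂ ^ 2 * x₃) * (1 - x₁ * x₂ * x₃))
      = g5 * g6 * g4 := by
    apply ring_inverse_eq
    calc (1 - x₂ ^ 2 * x₃) * (1 - x₁ ^ 2 * x₂ ^ 2 * x₃) * (1 - x₁ * x₂ * x₃) * (g5 * g6 * g4)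
        = ((1 - x₂ ^ 2 * x₃) * g5) * ((1 - x₁ ^ 2 * x₂ ^ 2 * x₃) * g6) *
          ((1 - x₁ * x₂ * x₃) * g4) := by ring
      _ = 1 := by rw [h4, h5, h6]; ring
  have hinvD : Ring.inverse ((1 - x₂ ^ 2 * x₃) * (1 - x₁ ^ 2 * x₂ ^ 2 * x₃) * (1 - x₃))
      = g5 * g6 * g3 := by
    apply ring_inverse_eq
    calc (1 - x₂ ^ 2 * x₃) * (1 - x₁ ^ 2 * x₂ ^ 2 * x₃) * (1 - x₃) * (g5 * g6 * g3)
        = ((1 - x₂ ^ 2 * x₃) * g5) * ((1 - x₁ ^ 2 * x₂ ^ 2 * x₃) * g6) * ((1 - x₃) * g3) := by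
          ring
      _ = 1 := by rw [h3, h5, h6]; ring
  have hinvE : Ring.inverse ((1 - x₂ ^ 2 * x₃) * (1 - x₁ ^ 2 * x₂ ^ 2 * x₃) * (1 - x₂))
      = g5 * g6 * g2 := by
    apply ring_inverse_eq
    calc (1 - x₂ ^ 2 * x₃) * (1 - x₁ ^ 2 * x₂ ^ 2 * x₃) * (1 - x₂) * (g5 * g6 * g2)
        = ((1 - x₂ ^ 2 * x₃) * g5) * ((1 - x₁ ^ 2 * x₂ ^ 2 * x₃) * g6) * ((1 - x₂) * g2) := by
          ring
      _ = 1 := by rw [h2, h5, h6]; ring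
  -- the main identity in terms of the geometric series
  have key : (1 - x₁ * x₂) * (1 - x₂ * x₃) * (1 - x₁ * x₂ ^ 2 * x₃) *
      (g1 * g2 * g3 * g4 * g5 * g6)
      = g1 * g5 + x₁ * x₃ * (g1 * g3 * g6) + x₁ ^ 2 * x₂ ^ 3 * x₃ ^ 2 * (g5 * g6 * g4)
        + x₃ * (g5 * g6 * g3) + x₂ * (g5 * g6 * g2) := by
    have hP : IsUnit ((1 - x₁) * (1 - x₂) * (1 - x₃) * (1 - x₁ * x₂ * x₃) *
        (1 - x₂ ^ 2 * x₃) * (1 - x₁ ^ 2 * x₂ ^ 2 * x₃)) := by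
      apply IsUnit.of_mul_eq_one (g1 * g2 * g3 * g4 * g5 * g6)
      calc (1 - x₁) * (1 - x₂) * (1 - x₃) * (1 - x₁ * x₂ * x₃) * (1 - x₂ ^ 2 * x₃) *
            (1 - x₁ ^ 2 * x₂ ^ 2 * x₃) * (g1 * g2 * g3 * g4 * g5 * g6)
          = ((1 - x₁) * g1) * ((1 - x₂) * g2) * ((1 - x₃) * g3) * ((1 - x₁ * x₂ * x₃) * g4) *
            ((1 - x₂ ^ 2 * x₃) * g5) * ((1 - x₁ ^ 2 * x₂ ^ 2 * x₃) * g6) := by ring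
        _ = 1 := by rw [h1, h2, h3, h4, h5, h6]; ring
    apply hP.mul_left_cancel
    calc (1 - x₁) * (1 - x₂) * (1 - x₃) * (1 - x₁ * x₂ * x₃) * (1 - x₂ ^ 2 * x₃) *
          (1 - x₁ ^ 2 * x₂ ^ 2 * x₃) *
          ((1 - x₁ * x₂) * (1 - x₂ * x₃) * (1 - x₁ * x₂ ^ 2 * x₃) *
            (g1 * g2 * g3 * g4 * g5 * g6))
        = (1 - x₁ * x₂) * (1 - x₂ * x₃) * (1 - x₁ * x₂ ^ 2 * x₃) *
          (((1 - x₁) * g1) * ((1 - x₂) * g2) * ((1 - x₃) * g3) * ((1 - x₁ * x₂ * x₃) * g4) *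
            ((1 - x₂ ^ 2 * x₃) * g5) * ((1 - x₁ ^ 2 * x₂ ^ 2 * x₃) * g6)) := by ring
      _ = (1 - x₁ * x₂) * (1 - x₂ * x₃) * (1 - x₁ * x₂ ^ 2 * x₃) := by
          rw [h1, h2, h3, h4, h5, h6]; ring
      _ = ((1 - x₂) * (1 - x₃) * (1 - x₁ * x₂ * x₃) * (1 - x₁ ^ 2 * x₂ ^ 2 * x₃)) * 1
          + x₁ * x₃ * ((1 - x₂) * (1 - x₁ * x₂ * x₃) * (1 - x₂ ^ 2 * x₃)) * 1
          + x₁ ^ 2 * x₂ ^ 3 * x₃ ^ 2 * ((1 - x₁) * (1 - x₂) * (1 - x₃)) * 1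
          + x₃ * ((1 - x₁) * (1 - x₂) * (1 - x₁ * x₂ * x₃)) * 1
          + x₂ * ((1 - x₁) * (1 - x₃) * (1 - x₁ * x₂ * x₃)) * 1 := by ring
      _ = ((1 - x₂) * (1 - x₃) * (1 - x₁ * x₂ * x₃) * (1 - x₁ ^ 2 * x₂ ^ 2 * x₃)) *
            (((1 - x₁) * g1) * ((1 - x₂ ^ 2 * x₃) * g5))
          + x₁ * x₃ * ((1 - x₂) * (1 - x₁ * x₂ * x₃) * (1 - x₂ ^ 2 * x₃)) *
            (((1 - x₁) * g1) * ((1 - x₃) * g3) * ((1 - x₁ ^ 2 * x₂ ^ 2 * x₃) * g6))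
          + x₁ ^ 2 * x₂ ^ 3 * x₃ ^ 2 * ((1 - x₁) * (1 - x₂) * (1 - x₃)) *
            (((1 - x₂ ^ 2 * x₃) * g5) * ((1 - x₁ ^ 2 * x₂ ^ 2 * x₃) * g6) *
              ((1 - x₁ * x₂ * x₃) * g4))
          + x₃ * ((1 - x₁) * (1 - x₂) * (1 - x₁ * x₂ * x₃)) *
            (((1 - x₂ ^ 2 * x₃) * g5) * ((1 - x₁ ^ 2 * x₂ ^ 2 * x₃) * g6) * ((1 - x₃) * g3))
          + x₂ * ((1 - x₁) * (1 - x₃) * (1 - x₁ * x₂ * x₃)) *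
            (((1 - x₂ ^ 2 * x₃) * g5) * ((1 - x₁ ^ 2 * x₂ ^ 2 * x₃) * g6) * ((1 - x₂) * g2)) := by
          rw [h1, h2, h3, h4, h5, h6]; ring
      _ = (1 - x₁) * (1 - x₂) * (1 - x₃) * (1 - x₁ * x₂ * x₃) * (1 - x₂ ^ 2 * x₃) *
          (1 - x₁ ^ 2 * x₂ ^ 2 * x₃) *
          (g1 * g5 + x₁ * x₃ * (g1 * g3 * g6) + x₁ ^ 2 * x₂ ^ 3 * x₃ ^ 2 * (g5 * g6 * g4)
            + x₃ * (g5 * g6 * g3) + x₂ * (g5 * g6 * g2)) := by ring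
  constructor
  · rw [hinvP, hinvA, hinvB, hinvC, hinvD, hinvE]
    exact key
  · intro d
    rw [hinvP, key]
    have hX : ∀ s : Fin 3, ∀ e, 0 ≤ MvPowerSeries.coeff e (MvPowerSeries.X s : MvPowerSeries (Fin 3) ℤ) := by
      intro s e
      rw [MvPowerSeries.X_def, MvPowerSeries.coeff_monomial]
      split <;> norm_num
    have hg : ∀ D : Fin 3 →₀ ℕ, ∀ e, 0 ≤ MvPowerSeries.coeff e (geomSeries D) :=
      fun D e => geomSeries_nonneg D e
    have t1 : ∀ e, 0 ≤ MvPowerSeries.coeff e (g1 * g5) :=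
      coeff_mul_nonneg _ _ (hg D1) (hg D5)
    have t2 : ∀ e, 0 ≤ MvPowerSeries.coeff e (x₁ * x₃ * (g1 * g3 * g6)) := by
      apply coeff_mul_nonneg
      · exact coeff_mul_nonneg _ _ (hX 0) (hX 2)
      · exact coeff_mul_nonneg _ _ (coeff_mul_nonneg _ _ (hg D1) (hg D3)) (hg D6)
    have t3 : ∀ e, 0 ≤ MvPowerSeries.coeff e
        (x₁ ^ 2 * x₂ ^ 3 * x₃ ^ 2 * (g5 * g6 * g4)) := by
      apply coeff_mul_nonneg
      · apply coeff_mul_nonneg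
        · apply coeff_mul_nonneg
          · rw [show x₁ ^ 2 = x₁ * x₁ by ring]
            exact coeff_mul_nonneg _ _ (hX 0) (hX 0)
          · rw [show x₂ ^ 3 = x₂ * x₂ * x₂ by ring]
            exact coeff_mul_nonneg _ _ (coeff_mul_nonneg _ _ (hX 1) (hX 1)) (hX 1)
        · rw [show x₃ ^ 2 = x₃ * x₃ by ring]
          exact coeff_mul_nonneg _ _ (hX 2) (hX 2)
      · exact coeff_mul_nonneg _ _ (coeff_mul_nonneg _ _ (hg D5) (hg D6)) (hg D4)
    have t4 : ∀ e, 0 ≤ MvPowerSeries.coeff e (x₃ * (g5 * g6 * g3)) :=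
      coeff_mul_nonneg _ _ (hX 2)
        (coeff_mul_nonneg _ _ (coeff_mul_nonneg _ _ (hg D5) (hg D6)) (hg D3))
    have t5 : ∀ e, 0 ≤ MvPowerSeries.coeff e (x₂ * (g5 * g6 * g2)) :=
      coeff_mul_nonneg _ _ (hX 1)
        (coeff_mul_nonneg _ _ (coeff_mul_nonneg _ _ (hg D5) (hg D6)) (hg D2))
    simp only [map_add]
    have := t1 d
    have := t2 d
    have := t3 d
    have := t4 d
    have := t5 d
    linarith
end

section
/- With notation as in the main proposition (equal-rank grading of a root system, partition function Q on positive noncompact roots, Weyl group W_k of the compact roots, Blattner's formula B(δ,μ) = Σ_{w∈W_k} (-1)^{ℓ(w)} Q(w(δ+ρ)-ρ-μ)), the generating function b(δ) = Σ_μ B(δ,μ) e^μ satisfies b(δ) = ch L_k(δ) · b(0), i.e. B(δ,μ) = Σ_γ m_γ B(0, μ-γ) where m_γ are the weight multiplicities of the irreducible finite-dimensional k-representation L_k(δ) with highest weight δ. -/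
/-- The main proposition: `b(δ) = ch L_k(δ) · b(0)`, i.e.
`B(δ,μ) = Σ_γ m_γ B(0, μ-γ)` where `m_γ = ch γ` are the weight multiplicities of
the irreducible `k`-representation with highest weight `δ`.

Setting: `W` is the Weyl group of the compact roots acting on the weight lattice
`L` with length function `ℓ` and sign character, `Q` is the partition function of
the positive noncompact roots `Φnc`, and
`B(δ,μ) = Σ_{w∈W} (-1)^{ℓ(w)} Q(w(δ+ρ)-ρ-μ)`.  The character `ch` of `L_k(δ)` is
encoded, via the Weyl character formula in the group algebra `ℤ[L]`, by
`ch · ∏_{γ∈Φ⁺_c}(1-e^{-γ}) = Σ_w (-1)^{ℓ(w)} e^{w(δ+ρ)-ρ}`, together with the Weyl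
denominator formula `∏_{γ∈Φ⁺_c}(1-e^{-γ}) = Σ_w (-1)^{ℓ(w)} e^{w·0}`. -/
theorem blattner_b_delta_eq_char_mul_b_zero
    {W L : Type*} [Group W] [Fintype W] [AddCommGroup L] [DecidableEq L]
    [DistribMulAction W L]
    (ℓ : W → ℕ)
    (hsign : ∀ v w : W, ((-1 : ℤ)) ^ ℓ (v * w) = (-1) ^ ℓ v * (-1) ^ ℓ w)
    (Φc Φnc : Finset L) (ρ : L)
    (Q : L → ℕ)
    (hQ : ∀ ξ : L, Q ξ = Nat.card {f : Φnc → ℕ // ∑ γ : Φnc, f γ • (γ : L) = ξ})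
    (B : L → L → ℤ)
    (hB : ∀ δ μ : L, B δ μ = ∑ w : W, (-1) ^ ℓ w * (Q (w • (δ + ρ) - ρ - μ) : ℤ))
    (δ : L)
    (ch : AddMonoidAlgebra ℤ L)
    (hch : ch * ∏ γ ∈ Φc, (1 - AddMonoidAlgebra.single (-γ) (1 : ℤ))
        = ∑ w : W, AddMonoidAlgebra.single (w • (δ + ρ) - ρ) ((-1 : ℤ) ^ ℓ w))
    (hden : (∏ γ ∈ Φc, (1 - AddMonoidAlgebra.single (-γ) (1 : ℤ)))
        = ∑ w : W, AddMonoidAlgebra.single (w • ρ - ρ) ((-1 : ℤ) ^ ℓ w)) :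
    ∀ μ : L, B δ μ = ∑ γ ∈ ch.coeff.support, ch.coeff γ * B 0 (μ - γ) := by
  intro μ
  classical
  set F : L → ℤ := fun ξ => (Q (ξ - μ) : ℤ) with hF
  set Φ : AddMonoidAlgebra ℤ L →+ ℤ :=
    (Finsupp.liftAddHom (fun ξ => AddMonoidHom.mulRight (F ξ))).comp
      AddMonoidAlgebra.coeffAddEquiv.toAddMonoidHom with hΦ
  have hsingle : ∀ (a : L) (c : ℤ), Φ (AddMonoidAlgebra.single a c) = c * F a := by
    intro a c
    show (Finsupp.liftAddHom fun ξ => AddMonoidHom.mulRight (F ξ)) (Finsupp.single a c) = c * F a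
    rw [Finsupp.liftAddHom_apply_single]
    rfl
  have key : ∀ (a : L) (c : ℤ) (f : AddMonoidAlgebra ℤ L),
      Φ (f * AddMonoidAlgebra.single a c) = c * ∑ γ ∈ f.coeff.support, f.coeff γ * F (γ + a) := by
    intro a c f
    have : Φ (f * AddMonoidAlgebra.single a c)
        = c * Finsupp.sum f.coeff (fun γ d => d * F (γ + a)) := by
      induction f using AddMonoidAlgebra.induction_linear with
      | zero => simp
      | add f g hf hg =>
          rw [add_mul, map_add, hf, hg, AddMonoidAlgebra.coeff_add,
            Finsupp.sum_add_index' (fun γ => by simp) (fun γ d₁ d₂ => by ring)]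
          ring
      | single b d =>
          rw [show AddMonoidAlgebra.single b d * AddMonoidAlgebra.single a c
              = AddMonoidAlgebra.single (b + a) (d * c) from
              AddMonoidAlgebra.single_mul_single _ _ _ _, hsingle, AddMonoidAlgebra.coeff_single,
            Finsupp.sum_single_index (by simp)]
          ring
    exact this
  have hNum : Φ (∑ w : W, AddMonoidAlgebra.single (w • (δ + ρ) - ρ) ((-1 : ℤ) ^ ℓ w))
      = B δ μ := by
    rw [map_sum, hB]
    refine Finset.sum_congr rfl fun w _ => ?_
    rw [hsingle]
  rw [← hNum, ← hch, hden, Finset.mul_sum, map_sum]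
  have hterm : ∀ w : W, Φ (ch * AddMonoidAlgebra.single (w • ρ - ρ) ((-1 : ℤ) ^ ℓ w))
      = (-1 : ℤ) ^ ℓ w * ∑ γ ∈ ch.coeff.support, ch.coeff γ * F (γ + (w • ρ - ρ)) := fun w =>
    key _ _ _
  rw [Finset.sum_congr rfl fun w _ => hterm w]
  simp_rw [Finset.mul_sum]
  rw [Finset.sum_comm]
  refine Finset.sum_congr rfl fun γ _ => ?_
  rw [hB, Finset.mul_sum]
  refine Finset.sum_congr rfl fun w _ => ?_
  have harg : γ + (w • ρ - ρ) - μ = w • (0 + ρ) - ρ - (μ - γ) := by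
    rw [zero_add]; abel
  simp only [hF]
  rw [harg]
  ring
end

section
/- In ℤ[[x,y]], the series (1-x²y³)(1-y) / ((1-x)(1-xy)(1-xy²)(1-xy³)) equals 1/((1-x)(1-xy²)) + x/((1-x²)(1-xy)) - (x+y+xy²)/((1-x²)(1-xy³)). -/
private lemma inv_mul_aux {R : Type*} [CommRing R] {u d r : R} (hu : IsUnit u)
    (h : d = u * r) : Ring.inverse u * d = r := by
  rw [h, ← mul_assoc, Ring.inverse_mul_cancel _ hu, one_mul]

/-- Partial fraction decomposition of `b(0)` for `G₂` in the Borel-de Siebenthal case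
`Π_c = {β}`: in `ℤ[[x,y]]`,
`(1-x²y³)(1-y)/((1-x)(1-xy)(1-xy²)(1-xy³))
  = 1/((1-x)(1-xy²)) + x/((1-x²)(1-xy)) - (x+y+xy²)/((1-x²)(1-xy³))`. -/
theorem blattner_G2_borel_de_siebenthal :
    let x : MvPowerSeries (Fin 2) ℤ := MvPowerSeries.X 0
    let y : MvPowerSeries (Fin 2) ℤ := MvPowerSeries.X 1
    (1 - x ^ 2 * y ^ 3) * (1 - y) *
        Ring.inverse ((1 - x) * (1 - x * y) * (1 - x * y ^ 2) * (1 - x * y ^ 3))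
      = Ring.inverse ((1 - x) * (1 - x * y ^ 2))
        + x * Ring.inverse ((1 - x ^ 2) * (1 - x * y))
        - (x + y + x * y ^ 2) * Ring.inverse ((1 - x ^ 2) * (1 - x * y ^ 3)) := by
  intro x y
  have hunit : ∀ p : MvPowerSeries (Fin 2) ℤ,
      MvPowerSeries.constantCoeff p = 1 → IsUnit p := by
    intro p hp
    rw [MvPowerSeries.isUnit_iff_constantCoeff, hp]
    exact isUnit_one
  have cX : ∀ i : Fin 2, MvPowerSeries.constantCoeff (MvPowerSeries.X i : MvPowerSeries (Fin 2) ℤ) = 0 :=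
    fun i => MvPowerSeries.constantCoeff_X i
  have hA : IsUnit (1 - x) := hunit _ (by simp [x, cX 0])
  have hB : IsUnit (1 - x * y) := hunit _ (by simp [x, y, cX 0, cX 1])
  have hC : IsUnit (1 - x * y ^ 2) := hunit _ (by simp [x, y, cX 0, cX 1])
  have hE : IsUnit (1 - x * y ^ 3) := hunit _ (by simp [x, y, cX 0, cX 1])
  have hF : IsUnit (1 - x ^ 2) := hunit _ (by simp [x, cX 0])
  set A := 1 - x
  set B := 1 - x * y
  set C := 1 - x * y ^ 2
  set E := 1 - x * y ^ 3
  set F := 1 - x ^ 2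
  set D := A * B * C * E * F with hD
  have hDu : IsUnit D := (((hA.mul hB).mul hC).mul hE).mul hF
  apply hDu.mul_right_cancel
  have e1 : Ring.inverse (A * B * C * E) * D = F :=
    inv_mul_aux ((hA.mul hB).mul hC |>.mul hE) (by ring)
  have e2 : Ring.inverse (A * C) * D = B * E * F :=
    inv_mul_aux (hA.mul hC) (by ring)
  have e3 : Ring.inverse (F * B) * D = A * C * E :=
    inv_mul_aux (hF.mul hB) (by ring)
  have e4 : Ring.inverse (F * E) * D = A * B * C :=
    inv_mul_aux (hF.mul hE) (by ring)
  calc (1 - x ^ 2 * y ^ 3) * (1 - y) * Ring.inverse (A * B * C * E) * D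
      = (1 - x ^ 2 * y ^ 3) * (1 - y) * (Ring.inverse (A * B * C * E) * D) := by ring
    _ = (1 - x ^ 2 * y ^ 3) * (1 - y) * F := by rw [e1]
    _ = B * E * F + x * (A * C * E) - (x + y + x * y ^ 2) * (A * B * C) := by
        unfold A B C E F
        ring
    _ = Ring.inverse (A * C) * D + x * (Ring.inverse (F * B) * D)
        - (x + y + x * y ^ 2) * (Ring.inverse (F * E) * D) := by rw [e2, e3, e4]
    _ = (Ring.inverse (A * C) + x * Ring.inverse (F * B)
        - (x + y + x * y ^ 2) * Ring.inverse (F * E)) * D := by ring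
end

section
/- In ℤ[[x,y]], the series (1-x²y³)(1-y) / ((1-x)(1-xy)(1-xy²)(1-xy³)) has at least one negative coefficient. -/
open MvPowerSeries Finsupp

private lemma coeff_X0_mul (φ : MvPowerSeries (Fin 2) ℤ) :
    MvPowerSeries.coeff (Finsupp.single 1 1) (MvPowerSeries.X 0 * φ) = 0 := by
  rw [MvPowerSeries.X, MvPowerSeries.coeff_monomial_mul, if_neg]
  intro h
  have := Finsupp.le_def.mp h 0
  simp at this

private lemma coeff_X1_mul (φ : MvPowerSeries (Fin 2) ℤ) :
    MvPowerSeries.coeff (Finsupp.single 1 1) (MvPowerSeries.X 1 * φ) =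
      MvPowerSeries.constantCoeff φ := by
  rw [MvPowerSeries.X, MvPowerSeries.coeff_monomial_mul, if_pos le_rfl]
  simp [MvPowerSeries.coeff_zero_eq_constantCoeff]

/-- `b(0)` for `G₂` with `Π_c = {β}` (Borel-de Siebenthal) has at least one negative
coefficient in `ℤ[[x,y]]`. -/
theorem blattner_G2_borel_de_siebenthal_negative :
    let x : MvPowerSeries (Fin 2) ℤ := MvPowerSeries.X 0
    let y : MvPowerSeries (Fin 2) ℤ := MvPowerSeries.X 1
    ∃ d : Fin 2 →₀ ℕ,
      MvPowerSeries.coeff d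
        ((1 - x ^ 2 * y ^ 3) * (1 - y) *
          Ring.inverse ((1 - x) * (1 - x * y) * (1 - x * y ^ 2) * (1 - x * y ^ 3)))
        < 0 := by
  intro x y
  set D : MvPowerSeries (Fin 2) ℤ :=
    (1 - x) * (1 - x * y) * (1 - x * y ^ 2) * (1 - x * y ^ 3) with hDdef
  have hDc : MvPowerSeries.constantCoeff D = 1 := by
    simp [hDdef, x, y]
  have hu : IsUnit D := MvPowerSeries.isUnit_iff_constantCoeff.mpr (by rw [hDc]; exact isUnit_one)
  set I : MvPowerSeries (Fin 2) ℤ := Ring.inverse D with hIdef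
  have hDI : D * I = 1 := Ring.mul_inverse_cancel D hu
  have hI0 : MvPowerSeries.constantCoeff I = 1 := by
    have := congrArg (MvPowerSeries.constantCoeff) hDI
    rw [map_mul, hDc, one_mul, map_one] at this
    exact this
  set d : Fin 2 →₀ ℕ := Finsupp.single 1 1 with hd
  have hdne : d ≠ 0 := by simp [hd]
  -- D = 1 + X 0 * q
  set q : MvPowerSeries (Fin 2) ℤ :=
    -(1 + y + y ^ 2 + y ^ 3) + x * (y + y ^ 2 + 2 * y ^ 3 + y ^ 4 + y ^ 5)
      - x ^ 2 * (y ^ 3 + y ^ 4 + y ^ 5 + y ^ 6) + x ^ 3 * y ^ 6 with hq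
  have hDq : D = 1 + x * q := by rw [hDdef, hq]; ring
  have hId : MvPowerSeries.coeff d I = 0 := by
    have h1 : MvPowerSeries.coeff d (D * I) = 0 := by
      rw [hDI, MvPowerSeries.coeff_one, if_neg hdne]
    have h2 : D * I = I + x * (q * I) := by rw [hDq]; ring
    rw [h2, map_add, coeff_X0_mul] at h1
    simpa using h1
  refine ⟨d, ?_⟩
  have h3 : (1 - x ^ 2 * y ^ 3) * (1 - y) * I = I - y * I + x * ((x * y ^ 4 - x * y ^ 3) * I) := by
    ring
  rw [h3, map_add, map_sub, coeff_X0_mul, hId, coeff_X1_mul, hI0]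
  norm_num
end
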